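/- Let d ≥ 1, k ≥ 1, and let Λ ⊆ {1,…,d}^ℤ be a nonempty k-step subshift of finite type with language Λ*. Let H_Λ := ℓ²(Λ*) with orthonormal basis (e_γ)_{γ ∈ Λ*}, and for each letter i let S_i ∈ B(H_Λ) be the bounded operator determined by S_i e_γ = e_{iγ} if iγ ∈ Λ* and S_i e_γ = 0 otherwise; for a word α = α₁⋯α_m write S^α := S_{α₁}⋯S_{α_m}. Then: (i) S_i* S_j = 0 for all i ≠ j; and (ii) for every letter i, the operator S_i* S_i − Σ_{α ∈ E_i^k} S^α (S^α)* equals the orthogonal projection onto the finite-dimensional subspace span{e_γ : γ ∈ Λ*, |γ| < k, iγ ∈ Λ*}; in particular S_i*S_i agrees with Σ_{α ∈ E_i^k} S^α (S^α)* modulo compact operators. -/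

import Mathlib

/-!
Every operator involved maps basis vectors to basis vectors or to `0`: `S^α e_γ = e_{αγ}`, and
`(S^α)*` strips the prefix `α`. Hence `S^α (S^α)*` is the diagonal projection onto the `e_γ` with
`α` a prefix of `γ`, and `S_i* S_i` the one onto the `e_γ` with `iγ ∈ Λ*`. A word `γ` with
`|γ| ≥ k` has exactly one prefix of length `k`, and that prefix lies in `E_i^k` iff `iγ ∈ Λ*`,
because in a `k`-step SFT two words overlapping in `k` letters glue together. So the difference
is the diagonal projection onto the short words `γ` with `iγ ∈ Λ*`.
-/

noncomputable section

/-- A finite word occurs as a block of consecutive entries of a bi-infinite sequence. -/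
def OccursIn {d : ℕ} (w : List (Fin d)) (x : ℤ → Fin d) : Prop :=
  ∃ m : ℤ, ∀ i : Fin w.length, x (m + (i : ℕ)) = w.get i

/-- The language of `Λ ⊆ {1,…,d}^ℤ`: all finite words occurring as blocks of points of `Λ`. -/
def lang {d : ℕ} (Λ : Set (ℤ → Fin d)) : Set (List (Fin d)) :=
  {w | ∃ x ∈ Λ, OccursIn w x}

/-- `Λ` is a `k`-step subshift of finite type. -/
def IsKStepSFT {d : ℕ} (k : ℕ) (Λ : Set (ℤ → Fin d)) : Prop :=
  ∃ W : Set (List (Fin d)), W.Finite ∧ (∀ w ∈ W, w ≠ [] ∧ w.length ≤ k + 1) ∧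
    Λ = {x | ∀ w ∈ W, ¬ OccursIn w x}

/-- `H_Λ = ℓ²(Λ*)`, the Fock space of the subshift. -/
abbrev ShiftSp {d : ℕ} (Λ : Set (ℤ → Fin d)) : Type := lp (fun _ : ↥(lang Λ) => ℂ) 2

/-- The standard basis vector `e_γ` of `ℓ²(Λ*)`. -/
def eVec {d : ℕ} (Λ : Set (ℤ → Fin d)) (γ : ↥(lang Λ)) : ShiftSp Λ := lp.single 2 γ 1

/-- `S^α = S_{α₁} ⋯ S_{α_m}` (empty product `= 1`). -/
def wordOp {d : ℕ} {A : Type*} [Monoid A] (S : Fin d → A) (α : List (Fin d)) : A :=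
  (α.map S).prod

/-- `E_i^k = {α ∈ Λ^k : iα ∈ Λ*}`. -/
def Eik {d : ℕ} (Λ : Set (ℤ → Fin d)) (k : ℕ) (i : Fin d) : Set (List (Fin d)) :=
  {α | α ∈ lang Λ ∧ α.length = k ∧ (i :: α) ∈ lang Λ}

open scoped InnerProductSpace

section Language

variable {d k : ℕ} {Λ : Set (ℤ → Fin d)}

theorem occursIn_iff {w : List (Fin d)} {x : ℤ → Fin d} :
    OccursIn w x ↔ ∃ m : ℤ, ∀ j (hj : j < w.length), x (m + j) = w[j] :=
  ⟨fun ⟨m, hm⟩ => ⟨m, fun j hj => hm ⟨j, hj⟩⟩, fun ⟨m, hm⟩ => ⟨m, fun j => hm j j.2⟩⟩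

theorem OccursIn.of_isInfix {w v : List (Fin d)} {x : ℤ → Fin d} (hv : OccursIn v x)
    (h : w <:+: v) : OccursIn w x := by
  obtain ⟨s, t, rfl⟩ := h
  obtain ⟨m, hm⟩ := occursIn_iff.mp hv
  refine occursIn_iff.mpr ⟨m + s.length, fun j hj => ?_⟩
  have := hm (s.length + j) (by simp; omega)
  simpa [add_assoc, List.getElem_append_left, hj] using this

theorem mem_lang_of_isInfix {w v : List (Fin d)} (h : w <:+: v) (hv : v ∈ lang Λ) :
    w ∈ lang Λ :=
  let ⟨x, hx, hvx⟩ := hv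
  ⟨x, hx, hvx.of_isInfix h⟩

theorem IsKStepSFT.append_mem_lang (hΛ : IsKStepSFT k Λ) {u w v : List (Fin d)}
    (huw : u ++ w ∈ lang Λ) (hwv : w ++ v ∈ lang Λ) (hk : k ≤ w.length) :
    u ++ w ++ v ∈ lang Λ := by
  obtain ⟨W, -, hW, rfl⟩ := hΛ
  obtain ⟨a, ha, hua⟩ := huw
  obtain ⟨b, hb, hvb⟩ := hwv
  obtain ⟨p, hp⟩ := occursIn_iff.mp hua
  obtain ⟨m, hm⟩ := occursIn_iff.mp hvb
  set c : ℤ := p + u.length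
  set z : ℤ → Fin d := fun n => if n < c + w.length then a n else b (m + (n - c)) with hz
  have hza : ∀ n, n < c + w.length → z n = a n := fun n hn => if_pos hn
  have hzb : ∀ t : ℕ, z (c + t) = b (m + t) := by
    intro t
    by_cases ht : t < w.length
    · have h1 := hp (u.length + t) (by simp; omega)
      have h2 := hm t (by simp; omega)
      rw [hza _ (by omega), add_assoc, ← Nat.cast_add, h1, h2]
      simp [List.getElem_append_left, ht]
    · simp only [hz, if_neg (show ¬ c + t < c + w.length by omega), add_sub_cancel_left]
  -- A forbidden block has length at most `k + 1 ≤ |w| + 1`, so inside `z` it lies either in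
  -- the part copied from `a` or in the part copied from `b`.
  refine ⟨z, fun f hf hfz => ?_, occursIn_iff.mpr ⟨p, fun j hj => ?_⟩⟩
  · obtain ⟨q, hq⟩ := occursIn_iff.mp hfz
    have hf_len := (hW f hf).2
    by_cases hqa : q + f.length ≤ c + w.length
    · refine ha f hf (occursIn_iff.mpr ⟨q, fun j hj => ?_⟩)
      rw [← hza _ (by omega), hq]
    · refine hb f hf (occursIn_iff.mpr ⟨m + (q - c).toNat, fun j hj => ?_⟩)
      rw [add_assoc, ← Nat.cast_add, ← hzb, ← hq j hj]
      congr 1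
      omega
  · by_cases hju : j < u.length
    · rw [hza _ (by omega), hp j (by simp; omega)]
      simp [List.getElem_append_left, hju]
    · obtain ⟨t, rfl⟩ := Nat.exists_eq_add_of_le (not_lt.mp hju)
      rw [Nat.cast_add, ← add_assoc, hzb, hm t (by simp at hj ⊢; omega)]
      simp

theorem IsKStepSFT.take_mem_Eik_iff (hΛ : IsKStepSFT k Λ)
    {γ : List (Fin d)} (hγ : γ ∈ lang Λ) (i : Fin d) :
    γ.take k ∈ Eik Λ k i ↔ k ≤ γ.length ∧ i :: γ ∈ lang Λ := by
  constructor
  · rintro ⟨-, hlen, hi⟩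
    have hk : k ≤ γ.length := by simp at hlen; omega
    refine ⟨hk, ?_⟩
    simpa using
      hΛ.append_mem_lang (u := [i]) (v := γ.drop k) hi (by simpa using hγ) (by simp [hk])
  · rintro ⟨hk, hi⟩
    exact ⟨mem_lang_of_isInfix (List.take_prefix k γ).isInfix hγ, by simp [hk],
      mem_lang_of_isInfix (List.cons_prefix_cons.mpr ⟨rfl, List.take_prefix k γ⟩).isInfix hi⟩

end Language

namespace HilbertBasis

variable {ι 𝕜 E : Type*} [RCLike 𝕜] [NormedAddCommGroup E] [InnerProductSpace 𝕜 E]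
  (b : HilbertBasis ι 𝕜 E)

theorem ext_inner {x y : E} (h : ∀ i, ⟪b i, x⟫_𝕜 = ⟪b i, y⟫_𝕜) : x = y :=
  b.repr.injective <| lp.ext <| funext fun i => by simp only [b.repr_apply_apply, h]

theorem ext_continuousLinearMap {F : Type*} [TopologicalSpace F] [AddCommMonoid F] [Module 𝕜 F]
    [T2Space F] {A B : E →L[𝕜] F} (h : ∀ i, A (b i) = B (b i)) : A = B :=
  ContinuousLinearMap.ext_on (Submodule.dense_iff_topologicalClosure_eq_top.mpr b.dense_span)
    (Set.forall_mem_range.mpr h)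

theorem starProjection_span_image_apply (s : Set ι)
    [(Submodule.span 𝕜 (b '' s)).HasOrthogonalProjection] (i : ι) [Decidable (i ∈ s)] :
    (Submodule.span 𝕜 (b '' s)).starProjection (b i) = if i ∈ s then b i else 0 := by
  classical
  split_ifs with hi
  · exact Submodule.starProjection_eq_self_iff.mpr (Submodule.subset_span ⟨i, hi, rfl⟩)
  · refine (Submodule.starProjection_apply_eq_zero_iff _).mpr ?_
    have : Submodule.span 𝕜 {b i} ⟂ Submodule.span 𝕜 (b '' s) :=
      Submodule.isOrtho_span.mpr <| by
        rintro _ rfl _ ⟨j, hj, rfl⟩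
        exact b.orthonormal.2 fun hij => hi (hij ▸ hj)
    exact this.le (Submodule.mem_span_singleton_self _)

end HilbertBasis

theorem Submodule.isCompactOperator_starProjection {𝕜 E : Type*} [RCLike 𝕜]
    [NormedAddCommGroup E] [InnerProductSpace 𝕜 E] (K : Submodule 𝕜 E) [FiniteDimensional 𝕜 K] :
    IsCompactOperator K.starProjection :=
  (isCompactOperator_of_locallyCompactSpace_dom K.orthogonalProjectionOnto).clm_comp K.subtypeL

namespace ShiftSp

variable {d : ℕ} (Λ : Set (ℤ → Fin d))

def hilbertBasis : HilbertBasis (lang Λ) ℂ (ShiftSp Λ) :=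
  HilbertBasis.ofRepr (LinearIsometryEquiv.refl ℂ _)

@[simp]
theorem coe_hilbertBasis : ⇑(hilbertBasis Λ) = eVec Λ := by
  classical
  funext γ
  exact ((hilbertBasis Λ).repr_symm_single γ).symm

theorem inner_eVec_eVec (γ δ : lang Λ) [Decidable (γ = δ)] :
    ⟪eVec Λ γ, eVec Λ δ⟫_ℂ = if γ = δ then 1 else 0 := by
  classical
  rw [← coe_hilbertBasis]
  convert orthonormal_iff_ite.mp (hilbertBasis Λ).orthonormal γ δ

theorem inner_eVec_mk_eVec_mk {γ δ : List (Fin d)} (hγ : γ ∈ lang Λ) (hδ : δ ∈ lang Λ)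
    [Decidable (γ = δ)] :
    ⟪eVec Λ ⟨γ, hγ⟩, eVec Λ ⟨δ, hδ⟩⟫_ℂ = if γ = δ then 1 else 0 := by
  classical
  rw [inner_eVec_eVec]
  exact if_congr Subtype.mk_eq_mk rfl rfl

theorem ext_eVec {x y : ShiftSp Λ} (h : ∀ γ, ⟪eVec Λ γ, x⟫_ℂ = ⟪eVec Λ γ, y⟫_ℂ) : x = y :=
  (hilbertBasis Λ).ext_inner (by simpa using h)

theorem ext_eVec_continuousLinearMap {A B : ShiftSp Λ →L[ℂ] ShiftSp Λ}
    (h : ∀ γ, A (eVec Λ γ) = B (eVec Λ γ)) : A = B :=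
  (hilbertBasis Λ).ext_continuousLinearMap (by simpa using h)

theorem inner_eVec_star_apply (A : ShiftSp Λ →L[ℂ] ShiftSp Λ) (γ : lang Λ) (x : ShiftSp Λ) :
    ⟪eVec Λ γ, star A x⟫_ℂ = ⟪A (eVec Λ γ), x⟫_ℂ := by
  rw [ContinuousLinearMap.star_eq_adjoint, ContinuousLinearMap.adjoint_inner_right]

end ShiftSp

open ShiftSp

section Creation

variable {d : ℕ} (Λ : Set (ℤ → Fin d))

open Classical in
def IsCreationFamily (S : Fin d → ShiftSp Λ →L[ℂ] ShiftSp Λ) : Prop :=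
  ∀ i (γ : lang Λ), S i (eVec Λ γ) = if h : i :: γ.1 ∈ lang Λ then eVec Λ ⟨_, h⟩ else 0

variable {Λ} {S : Fin d → ShiftSp Λ →L[ℂ] ShiftSp Λ}

@[simp]
theorem wordOp_singleton (i : Fin d) : wordOp S [i] = S i := by
  simp [wordOp]

namespace IsCreationFamily

variable (hS : IsCreationFamily Λ S)
include hS

open Classical in
theorem wordOp_apply (α : List (Fin d)) (γ : lang Λ) :
    wordOp S α (eVec Λ γ) = if h : α ++ γ.1 ∈ lang Λ then eVec Λ ⟨_, h⟩ else 0 := by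
  induction α with
  | nil => simp [wordOp]
  | cons a α ih =>
    rw [wordOp, List.map_cons, List.prod_cons, mul_apply_eq_comp, ← wordOp, ih]
    by_cases h : α ++ γ.1 ∈ lang Λ
    · rw [dif_pos h, hS]
      rfl
    · rw [dif_neg h, map_zero, dif_neg]
      exact fun h' => h (mem_lang_of_isInfix (List.suffix_cons a _).isInfix h')

theorem star_wordOp_apply_append (α : List (Fin d)) (β : lang Λ) (h : α ++ β.1 ∈ lang Λ) :
    star (wordOp S α) (eVec Λ ⟨_, h⟩) = eVec Λ β := by
  classical
  refine ext_eVec Λ fun δ => ?_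
  rw [inner_eVec_star_apply, hS.wordOp_apply, inner_eVec_eVec]
  split_ifs with hδ hδβ hδβ
  · rw [inner_eVec_mk_eVec_mk, if_pos (congrArg (α ++ ·) (congrArg Subtype.val hδβ))]
  · rw [inner_eVec_mk_eVec_mk, if_neg fun h' => hδβ (Subtype.ext (List.append_cancel_left h'))]
  · exact absurd (hδβ ▸ h) hδ
  · exact inner_zero_left _

theorem star_wordOp_apply_of_not_prefix {α : List (Fin d)} {γ : lang Λ} (h : ¬α <+: γ.1) :
    star (wordOp S α) (eVec Λ γ) = 0 := by
  classical
  refine ext_eVec Λ fun δ => ?_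
  rw [inner_eVec_star_apply, hS.wordOp_apply, inner_zero_right]
  split_ifs with hδ
  · rw [inner_eVec_eVec, if_neg fun h' => h ⟨δ.1, congrArg Subtype.val h'⟩]
  · exact inner_zero_left _

theorem wordOp_mul_star_apply (α : List (Fin d)) (γ : lang Λ) [Decidable (α <+: γ.1)] :
    (wordOp S α * star (wordOp S α)) (eVec Λ γ) = if α <+: γ.1 then eVec Λ γ else 0 := by
  rw [mul_apply_eq_comp]
  split_ifs with h
  · obtain ⟨γ, hγ⟩ := γ
    obtain ⟨β, rfl⟩ := h
    have hβ : β ∈ lang Λ := mem_lang_of_isInfix (List.suffix_append α β).isInfix hγ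
    rw [hS.star_wordOp_apply_append α ⟨β, hβ⟩ hγ, hS.wordOp_apply, dif_pos hγ]
  · rw [hS.star_wordOp_apply_of_not_prefix h, map_zero]

theorem star_mul_self_apply (i : Fin d) (γ : lang Λ) [Decidable (i :: γ.1 ∈ lang Λ)] :
    (star (S i) * S i) (eVec Λ γ) = if i :: γ.1 ∈ lang Λ then eVec Λ γ else 0 := by
  rw [mul_apply_eq_comp, hS]
  split_ifs with h
  · rw [← wordOp_singleton (S := S)]
    exact hS.star_wordOp_apply_append [i] γ h
  · exact map_zero _

theorem star_mul_eq_zero {i j : Fin d} (hij : i ≠ j) : star (S i) * S j = 0 := by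
  refine ext_eVec_continuousLinearMap Λ fun γ => ?_
  rw [mul_apply_eq_comp, hS, zero_apply]
  split_ifs with h
  · rw [← wordOp_singleton (S := S), hS.star_wordOp_apply_of_not_prefix (by simp [hij])]
  · exact map_zero _

open Classical in
theorem finsum_wordOp_mul_star_apply (k : ℕ) (i : Fin d) (γ : lang Λ) :
    (∑ᶠ α ∈ Eik Λ k i, wordOp S α * star (wordOp S α)) (eVec Λ γ) =
      if γ.1.take k ∈ Eik Λ k i then eVec Λ γ else 0 := by
  have hfin : (Eik Λ k i).Finite := (List.finite_length_eq (Fin d) k).subset fun α hα => hα.2.1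
  calc _ = ∑ α ∈ hfin.toFinset, if α = γ.1.take k then eVec Λ γ else 0 := by
        rw [finsum_mem_eq_finite_toFinset_sum _ hfin, sum_apply]
        refine Finset.sum_congr rfl fun α hα => ?_
        have hk : α.length = k := (hfin.mem_toFinset.mp hα).2.1
        rw [hS.wordOp_mul_star_apply]
        exact if_congr (by rw [List.prefix_iff_eq_take, hk]) rfl rfl
    _ = _ := by
        rw [Finset.sum_ite_eq']
        exact if_congr hfin.mem_toFinset rfl rfl

end IsCreationFamily

end Creation

def shortWordSpan {d : ℕ} (Λ : Set (ℤ → Fin d)) (k : ℕ) (i : Fin d) : Submodule ℂ (ShiftSp Λ) :=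
  Submodule.span ℂ (hilbertBasis Λ '' {γ | γ.1.length < k ∧ i :: γ.1 ∈ lang Λ})

instance {d : ℕ} (Λ : Set (ℤ → Fin d)) (k : ℕ) (i : Fin d) :
    FiniteDimensional ℂ (shortWordSpan Λ k i) :=
  FiniteDimensional.span_of_finite ℂ <| Set.Finite.image _ <|
    ((List.finite_length_lt (Fin d) k).preimage Subtype.val_injective.injOn).subset
      fun _ hγ => hγ.1

theorem IsCreationFamily.star_mul_self_sub_finsum_eq_starProjection {d k : ℕ}
    {Λ : Set (ℤ → Fin d)} {S : Fin d → ShiftSp Λ →L[ℂ] ShiftSp Λ} (hS : IsCreationFamily Λ S)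
    (hΛ : IsKStepSFT k Λ) (i : Fin d) :
    star (S i) * S i - ∑ᶠ α ∈ Eik Λ k i, wordOp S α * star (wordOp S α) =
      (shortWordSpan Λ k i).starProjection := by
  classical
  refine (hilbertBasis Λ).ext_continuousLinearMap fun γ => ?_
  unfold shortWordSpan
  rw [HilbertBasis.starProjection_span_image_apply, coe_hilbertBasis, sub_apply,
    hS.star_mul_self_apply, hS.finsum_wordOp_mul_star_apply, hΛ.take_mem_Eik_iff γ.2]
  by_cases hk : k ≤ γ.1.length
  · simp [hk, not_lt.mpr hk]
  · simp [hk, not_le.mp hk]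

theorem stmt18_general (d k : ℕ)
    (Λ : Set (ℤ → Fin d)) (hΛ : IsKStepSFT k Λ)
    (S : Fin d → ShiftSp Λ →L[ℂ] ShiftSp Λ)
    (hS1 : ∀ (i : Fin d) (γ : ↥(lang Λ)) (h : (i :: (γ : List (Fin d))) ∈ lang Λ),
      S i (eVec Λ γ) = eVec Λ ⟨i :: (γ : List (Fin d)), h⟩)
    (hS0 : ∀ (i : Fin d) (γ : ↥(lang Λ)), (i :: (γ : List (Fin d))) ∉ lang Λ →
      S i (eVec Λ γ) = 0) :
    (∀ i j : Fin d, i ≠ j → star (S i) * S j = 0) ∧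
    (∀ i : Fin d,
      IsSelfAdjoint
        (star (S i) * S i - ∑ᶠ α ∈ Eik Λ k i, wordOp S α * star (wordOp S α)) ∧
      IsIdempotentElem
        (star (S i) * S i - ∑ᶠ α ∈ Eik Λ k i, wordOp S α * star (wordOp S α)) ∧
      LinearMap.range
          ((star (S i) * S i - ∑ᶠ α ∈ Eik Λ k i, wordOp S α * star (wordOp S α) :
            ShiftSp Λ →L[ℂ] ShiftSp Λ) : ShiftSp Λ →ₗ[ℂ] ShiftSp Λ) =
        Submodule.span ℂ {v | ∃ γ : ↥(lang Λ), (γ : List (Fin d)).length < k ∧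
          (i :: (γ : List (Fin d))) ∈ lang Λ ∧ v = eVec Λ γ} ∧
      FiniteDimensional ℂ
        ↥(Submodule.span ℂ {v | ∃ γ : ↥(lang Λ), (γ : List (Fin d)).length < k ∧
          (i :: (γ : List (Fin d))) ∈ lang Λ ∧ v = eVec Λ γ}) ∧
      IsCompactOperator
        ⇑(star (S i) * S i - ∑ᶠ α ∈ Eik Λ k i, wordOp S α * star (wordOp S α))) := by
  have hS : IsCreationFamily Λ S := fun i γ => by
    split_ifs with h
    exacts [hS1 i γ h, hS0 i γ h]
  refine ⟨fun i j => hS.star_mul_eq_zero, fun i => ?_⟩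
  have hspan : Submodule.span ℂ {v | ∃ γ : ↥(lang Λ), (γ : List (Fin d)).length < k ∧
      (i :: (γ : List (Fin d))) ∈ lang Λ ∧ v = eVec Λ γ} = shortWordSpan Λ k i := by
    rw [shortWordSpan, coe_hilbertBasis]
    congr 1
    ext v
    simp [eq_comm, and_assoc]
  rw [hS.star_mul_self_sub_finsum_eq_starProjection hΛ i, hspan]
  exact ⟨isSelfAdjoint_starProjection _, Submodule.isIdempotentElem_starProjection _,
    Submodule.range_starProjection _, inferInstance,
    (shortWordSpan Λ k i).isCompactOperator_starProjection⟩

/-- **Relations of the subshift creation operators modulo compacts.**  For a nonempty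
`k`-step SFT `Λ` and the creation operators `S_i` on `ℓ²(Λ*)`: (i) `S_i* S_j = 0` for
`i ≠ j`; (ii) `S_i* S_i − Σ_{α ∈ E_i^k} S^α (S^α)*` is the orthogonal projection onto the
finite-dimensional subspace `span{e_γ : γ ∈ Λ*, |γ| < k, iγ ∈ Λ*}`, and in particular it is
a compact operator. -/
theorem stmt18 (d k : ℕ) (hd : 1 ≤ d) (hk : 1 ≤ k)
    (Λ : Set (ℤ → Fin d)) (hΛ : IsKStepSFT k Λ) (hne : Λ.Nonempty)
    (S : Fin d → ShiftSp Λ →L[ℂ] ShiftSp Λ)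
    (hS1 : ∀ (i : Fin d) (γ : ↥(lang Λ)) (h : (i :: (γ : List (Fin d))) ∈ lang Λ),
      S i (eVec Λ γ) = eVec Λ ⟨i :: (γ : List (Fin d)), h⟩)
    (hS0 : ∀ (i : Fin d) (γ : ↥(lang Λ)), (i :: (γ : List (Fin d))) ∉ lang Λ →
      S i (eVec Λ γ) = 0) :
    (∀ i j : Fin d, i ≠ j → star (S i) * S j = 0) ∧
    (∀ i : Fin d,
      IsSelfAdjoint
        (star (S i) * S i - ∑ᶠ α ∈ Eik Λ k i, wordOp S α * star (wordOp S α)) ∧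
      IsIdempotentElem
        (star (S i) * S i - ∑ᶠ α ∈ Eik Λ k i, wordOp S α * star (wordOp S α)) ∧
      LinearMap.range
          ((star (S i) * S i - ∑ᶠ α ∈ Eik Λ k i, wordOp S α * star (wordOp S α) :
            ShiftSp Λ →L[ℂ] ShiftSp Λ) : ShiftSp Λ →ₗ[ℂ] ShiftSp Λ) =
        Submodule.span ℂ {v | ∃ γ : ↥(lang Λ), (γ : List (Fin d)).length < k ∧
          (i :: (γ : List (Fin d))) ∈ lang Λ ∧ v = eVec Λ γ} ∧
      FiniteDimensional ℂ
        ↥(Submodule.span ℂ {v | ∃ γ : ↥(lang Λ), (γ : List (Fin d)).length < k ∧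
          (i :: (γ : List (Fin d))) ∈ lang Λ ∧ v = eVec Λ γ}) ∧
      IsCompactOperator
        ⇑(star (S i) * S i - ∑ᶠ α ∈ Eik Λ k i, wordOp S α * star (wordOp S α))) :=
  stmt18_general d k Λ hΛ S hS1 hS0
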